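/- arXiv:2102.07149 — 2 statements merged into one kernel-verified Lean document; each statement's English description precedes it below -/
import Mathlib

section
/- Let k > 3 and p ≥ 1. Then (R^p·ω)(e_{k−1}, e_k, e_1, e_{k−1}, …, e_1, e_{k−1}, e_1, e_2), with the leading pair (e_{k−1}, e_k) followed by p−1 pairs (e_1, e_{k−1}) and ending with e_1, e_2, equals ε^p α (ω(e_1, e_k) + ω(e_2, e_{k−1})) + ε^p ω(e_2, e_k). -/
/-!
Write `a, b, c, d` for `e₁, e₂, e_{k-1}, e_k`. The operator `A = R(a, c)` kills `a` and `c`, so the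
pairs `(a, c)` of an argument list are inert under it and `A` acts on the remaining slots as a
derivation; moreover `R^p·ω` stays alternating in its last two slots. Expand
`R^{q+1}·ω(c, d, a, c, …, a, c, a, b)` along `B = R(c, d)`. When `B` hits the `a` of a pair it
produces `ε(αc + d)`: the `c`-part gives `R(c, c) = 0`, and the `d`-part survives only at the first
pair, where `R(d, c) = -B` reproduces the value for `q` pairs, multiplied by `ε`. The terms where
`B` hits the last two slots cancel, because after the first `A` acts they evaluate an alternating
form on a symmetric tensor.
-/

noncomputable section

/-- Gauss-equation curvature `R(X,Y)Z = h(Y,Z)·S(X) − h(X,Z)·S(Y)`. -/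
def RR {V : Type*} [AddCommGroup V] [Module ℝ V]
    (h : V →ₗ[ℝ] V →ₗ[ℝ] ℝ) (S : V →ₗ[ℝ] V) (X Y Z : V) : V :=
  h Y Z • S X - h X Z • S Y

/-- One application of the curvature action on an `m`-linear form (encoded as a
function on lists of vectors): `(R·T)(X,Y,Z₁,…,Zₘ) = −∑ᵢ T(Z₁,…,R(X,Y)Zᵢ,…,Zₘ)`;
the two newest (leftmost) arguments are consumed. -/
def RAct {V : Type*} [AddCommGroup V] [Module ℝ V]
    (h : V →ₗ[ℝ] V →ₗ[ℝ] ℝ) (S : V →ₗ[ℝ] V) (T : List V → ℝ) : List V → ℝ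
  | X :: Y :: Zs =>
      -∑ i ∈ Finset.range Zs.length, T (Zs.set i (RR h S X Y (Zs.getD i 0)))
  | _ => 0

/-- `R^p · ω`, as a function on lists of vectors (of length `2p+2`):
`R⁰·ω = ω` and `R^p·ω = R·(R^{p−1}·ω)`. -/
def Rpow {V : Type*} [AddCommGroup V] [Module ℝ V]
    (h : V →ₗ[ℝ] V →ₗ[ℝ] ℝ) (S : V →ₗ[ℝ] V) (ω : V →ₗ[ℝ] V →ₗ[ℝ] ℝ) (p : ℕ) :
    List V → ℝ :=
  (RAct h S)^[p] (fun l => ω (l.getD 0 0) (l.getD 1 0))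

/-- The list `X, Y, X, Y, …` with `p` pairs `(X, Y)`. -/
def pairList {V : Type*} (X Y : V) : ℕ → List V
  | 0 => []
  | p + 1 => X :: Y :: pairList X Y p

/-- The list `f 1, y, f 2, y, …, f p, y`. -/
def interleave {V : Type*} (f : ℕ → V) (y : V) : ℕ → List V
  | 0 => []
  | p + 1 => interleave f y p ++ [f (p + 1), y]

open Finset

/-- For `A = R(X,Y)`, the terms of `(R·T)(X, Y, pre ++ l ++ post)` (up to sign) coming from the
slots of the segment `l`. -/
def slotSum {V : Type*} [Zero V] (A : V → V) (T : List V → ℝ) (pre l post : List V) : ℝ :=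
  ∑ i ∈ range l.length, T (pre ++ l.set i (A (l.getD i 0)) ++ post)

section SlotSum

variable {V : Type*} [Zero V] (A : V → V) (T : List V → ℝ)

@[simp]
lemma slotSum_nil (pre post : List V) : slotSum A T pre [] post = 0 := by
  simp [slotSum]

lemma slotSum_cons (pre l post : List V) (x : V) :
    slotSum A T pre (x :: l) post =
      T (pre ++ A x :: (l ++ post)) + slotSum A T (pre ++ [x]) l post := by
  simp [slotSum, sum_range_succ', add_comm]

lemma slotSum_pair (pre post : List V) (x y : V) :
    slotSum A T pre [x, y] post = T (pre ++ A x :: y :: post) + T (pre ++ x :: A y :: post) := by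
  simp [slotSum_cons]

lemma slotSum_append (pre l₁ l₂ post : List V) :
    slotSum A T pre (l₁ ++ l₂) post =
      slotSum A T pre l₁ (l₂ ++ post) + slotSum A T (pre ++ l₁) l₂ post := by
  induction l₁ generalizing pre with
  | nil => simp
  | cons x l₁ ih => simp [slotSum_cons, ih, add_assoc]

end SlotSum

section Curvature

variable {V : Type*} [AddCommGroup V] [Module ℝ V] (h : V →ₗ[ℝ] V →ₗ[ℝ] ℝ) (S : V →ₗ[ℝ] V)

lemma RR_swap (X Y Z : V) : RR h S Y X Z = -RR h S X Y Z := by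
  simp only [RR]; abel

lemma RR_add_smul_left (r : ℝ) (u v Y Z : V) :
    RR h S (r • u + v) Y Z = r • RR h S u Y Z + RR h S v Y Z := by
  simp only [RR, map_add, map_smul, LinearMap.add_apply, LinearMap.smul_apply, smul_eq_mul]
  module

lemma RR_add_smul_mid (r : ℝ) (X u v Z : V) :
    RR h S X (r • u + v) Z = r • RR h S X u Z + RR h S X v Z := by
  rw [RR_swap, RR_add_smul_left, RR_swap, RR_swap h S X v]
  module

lemma RR_add_smul_right (r : ℝ) (X Y u v : V) :
    RR h S X Y (r • u + v) = r • RR h S X Y u + RR h S X Y v := by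
  simp only [RR, map_add, map_smul, smul_eq_mul]
  module

lemma RR_smul_right (r : ℝ) (X Y u : V) : RR h S X Y (r • u) = r • RR h S X Y u := by
  simp only [RR, map_smul, smul_eq_mul]
  module

end Curvature

lemma append_cons_eq_set {V : Type*} [Zero V] (pre post : List V) (v : V) :
    pre ++ v :: post = (pre ++ 0 :: post).set pre.length v := by
  rw [List.set_append_right _ _ le_rfl, Nat.sub_self, List.set_cons_zero]

section Multilinear

variable {V : Type*} [AddCommGroup V] [Module ℝ V]
variable (h ω : V →ₗ[ℝ] V →ₗ[ℝ] ℝ) (S : V →ₗ[ℝ] V)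

lemma Rpow_zero (x y : V) : Rpow h S ω 0 [x, y] = ω x y := rfl

lemma Rpow_succ_eq_neg_sum (p : ℕ) (X Y : V) (l : List V) :
    Rpow h S ω (p + 1) (X :: Y :: l) =
      -∑ i ∈ range l.length, Rpow h S ω p (l.set i (RR h S X Y (l.getD i 0))) := by
  rw [Rpow, Function.iterate_succ_apply']
  rfl

lemma Rpow_succ (p : ℕ) (X Y : V) (l : List V) :
    Rpow h S ω (p + 1) (X :: Y :: l) = -slotSum (RR h S X Y) (Rpow h S ω p) [] l [] := by
  simp [Rpow_succ_eq_neg_sum, slotSum]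

theorem Rpow_set_add_smul (p : ℕ) :
    ∀ l : List V, l.length = 2 * p + 2 → ∀ i < l.length, ∀ (r : ℝ) (u v : V),
      Rpow h S ω p (l.set i (r • u + v)) =
        r * Rpow h S ω p (l.set i u) + Rpow h S ω p (l.set i v) := by
  induction p with
  | zero =>
    rintro (_ | ⟨x, _ | ⟨y, _ | _⟩⟩) hl i hi r u v <;> simp at hl hi
    interval_cases i <;> simp [Rpow_zero, map_add, map_smul]
  | succ p ih =>
    rintro (_ | ⟨X, _ | ⟨Y, l⟩⟩) hl i hi r u v
    any_goals simp at hl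
    simp only [List.length_cons] at hl hi
    replace hl : l.length = 2 * p + 2 := by omega
    have neg_sum : ∀ {F G H : ℕ → ℝ}, (∀ j < l.length, F j = r * G j + H j) →
        -∑ j ∈ range l.length, F j =
          r * -∑ j ∈ range l.length, G j + -∑ j ∈ range l.length, H j := by
      intro F G H hFGH
      rw [sum_congr rfl fun j hj => hFGH j (mem_range.1 hj), sum_add_distrib, ← mul_sum]
      ring
    rcases i with _ | _ | i
    · simp only [List.set_cons_zero, Rpow_succ_eq_neg_sum]
      refine neg_sum fun j hj => ?_
      rw [RR_add_smul_left]
      exact ih l hl j hj r _ _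
    · simp only [List.set_cons_succ, List.set_cons_zero, Rpow_succ_eq_neg_sum]
      refine neg_sum fun j hj => ?_
      rw [RR_add_smul_mid]
      exact ih l hl j hj r _ _
    · have hi : i < l.length := by omega
      simp only [List.set_cons_succ, Rpow_succ_eq_neg_sum, List.length_set]
      refine neg_sum fun j hj => ?_
      rcases eq_or_ne j i with rfl | hji
      · simp only [List.getD_eq_getElem?_getD, List.getElem?_set_self hj, Option.getD_some,
          List.set_set, RR_add_smul_right]
        exact ih l hl j hj r _ _
      · simp only [List.getD_eq_getElem?_getD, List.getElem?_set_ne hji.symm,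
          List.set_comm _ _ hji.symm]
        exact ih _ (by simpa using hl) i (by simpa using hi) r u v

variable {p : ℕ}

lemma Rpow_set_zero {l : List V} (hl : l.length = 2 * p + 2) {i : ℕ} (hi : i < l.length) :
    Rpow h S ω p (l.set i 0) = 0 := by
  have := Rpow_set_add_smul h ω S p l hl i hi 1 0 0
  simp only [one_smul, add_zero, one_mul] at this
  linarith

lemma Rpow_set_neg {l : List V} (hl : l.length = 2 * p + 2) {i : ℕ} (hi : i < l.length) (v : V) :
    Rpow h S ω p (l.set i (-v)) = -Rpow h S ω p (l.set i v) := by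
  simpa [Rpow_set_zero h ω S hl hi] using Rpow_set_add_smul h ω S p l hl i hi (-1) v 0

lemma Rpow_succ_swap {l : List V} (hl : l.length = 2 * p + 2) (X Y : V) :
    Rpow h S ω (p + 1) (Y :: X :: l) = -Rpow h S ω (p + 1) (X :: Y :: l) := by
  simp only [Rpow_succ_eq_neg_sum, RR_swap h S X Y, neg_neg, ← sum_neg_distrib]
  exact sum_congr rfl fun i hi => by rw [Rpow_set_neg h ω S hl (mem_range.1 hi), neg_neg]

lemma Rpow_mid_zero {pre post : List V} (hlen : pre.length + post.length = 2 * p + 1) :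
    Rpow h S ω p (pre ++ 0 :: post) = 0 := by
  rw [append_cons_eq_set]
  exact Rpow_set_zero h ω S (by simp; omega) (by simp)

lemma Rpow_mid_add_smul {pre post : List V} (hlen : pre.length + post.length = 2 * p + 1)
    (r s : ℝ) (u v : V) :
    Rpow h S ω p (pre ++ (r • u + s • v) :: post) =
      r * Rpow h S ω p (pre ++ u :: post) + s * Rpow h S ω p (pre ++ v :: post) := by
  have hl : (pre ++ 0 :: post).length = 2 * p + 2 := by simp; omega
  have hi : pre.length < (pre ++ 0 :: post).length := by simp
  rw [append_cons_eq_set pre post (r • u + s • v), append_cons_eq_set pre post u,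
    append_cons_eq_set pre post v, Rpow_set_add_smul h ω S p _ hl _ hi, ← add_zero (s • v),
    Rpow_set_add_smul h ω S p _ hl _ hi, Rpow_set_zero h ω S hl hi, add_zero]

lemma Rpow_append_pair_add_smul_right {l : List V} (hl : l.length = 2 * p) (r s : ℝ) (x u v : V) :
    Rpow h S ω p (l ++ [x, r • u + s • v]) =
      r * Rpow h S ω p (l ++ [x, u]) + s * Rpow h S ω p (l ++ [x, v]) := by
  simpa using Rpow_mid_add_smul h ω S (pre := l ++ [x]) (post := []) (by simp [hl]) r s u v

theorem Rpow_append_pair_swap (hω : ω.IsAlt) (p : ℕ) :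
    ∀ l : List V, l.length = 2 * p → ∀ x y : V,
      Rpow h S ω p (l ++ [x, y]) = -Rpow h S ω p (l ++ [y, x]) := by
  induction p with
  | zero =>
    rintro (_ | _) hl x y
    · exact neg_eq_iff_eq_neg.1 (hω.neg x y)
    · simp at hl
  | succ p ih =>
    rintro (_ | ⟨X, _ | ⟨Y, l⟩⟩) hl x y
    · simp at hl
    · simp at hl; omega
    replace hl : l.length = 2 * p := by simp at hl; omega
    have hslots : ∀ z w, slotSum (RR h S X Y) (Rpow h S ω p) [] l [z, w] =
        -slotSum (RR h S X Y) (Rpow h S ω p) [] l [w, z] := fun z w => by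
      simp only [slotSum, List.nil_append, ← sum_neg_distrib]
      exact sum_congr rfl fun i _ => ih _ (by simp [hl]) z w
    simp only [List.cons_append, Rpow_succ, slotSum_append, slotSum_pair, List.nil_append,
      List.append_nil]
    rw [hslots, ih l hl (RR h S X Y x), ih l hl x (RR h S X Y y)]
    ring

end Multilinear

section PairList

variable {V : Type*}

@[simp]
lemma pairList_length (a c : V) (m : ℕ) : (pairList a c m).length = 2 * m := by
  induction m with
  | zero => rfl
  | succ m ih => simp [pairList, ih]; ring

lemma eq_or_eq_of_mem_pairList {a c x : V} {m : ℕ} (hx : x ∈ pairList a c m) : x = a ∨ x = c := by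
  induction m with
  | zero => simp [pairList] at hx
  | succ m ih =>
    simp only [pairList, List.mem_cons] at hx
    rcases hx with hx | hx | hx
    exacts [.inl hx, .inr hx, ih hx]

end PairList

section SlotSumRpow

variable {V : Type*} [AddCommGroup V] [Module ℝ V]
variable (h ω : V →ₗ[ℝ] V →ₗ[ℝ] ℝ) (S : V →ₗ[ℝ] V) {p : ℕ}

lemma slotSum_Rpow_eq_zero {A : V → V} {pre l post : List V} (hA : ∀ x ∈ l, A x = 0)
    (hlen : pre.length + l.length + post.length = 2 * p + 2) :
    slotSum A (Rpow h S ω p) pre l post = 0 := by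
  induction l generalizing pre with
  | nil => simp
  | cons x l ih =>
    simp only [List.length_cons] at hlen
    rw [slotSum_cons, hA x List.mem_cons_self, Rpow_mid_zero h ω S (by simp; omega),
      ih (fun y hy => hA y (List.mem_cons_of_mem x hy)) (by simp; omega), add_zero]

lemma slotSum_Rpow_pairList_succ {A : V → V} {a c : V} (hc : A c = 0) (m : ℕ)
    {pre post : List V} (hlen : pre.length + 2 * (m + 1) + post.length = 2 * p + 2) :
    slotSum A (Rpow h S ω p) pre (pairList a c (m + 1)) post =
      ∑ ts ∈ antidiagonal m,
        Rpow h S ω p (pre ++ pairList a c ts.1 ++ A a :: c :: (pairList a c ts.2 ++ post)) := by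
  have step : ∀ {m : ℕ} {pre : List V}, pre.length + 2 * (m + 1) + post.length = 2 * p + 2 →
      slotSum A (Rpow h S ω p) pre (pairList a c (m + 1)) post =
        Rpow h S ω p (pre ++ A a :: c :: (pairList a c m ++ post)) +
          slotSum A (Rpow h S ω p) (pre ++ [a, c]) (pairList a c m) post := by
    intro m pre hlen
    rw [pairList, slotSum_cons, slotSum_cons, hc, Rpow_mid_zero h ω S (by simp; omega)]
    simp
  induction m generalizing pre with
  | zero => rw [step hlen]; simp [pairList]
  | succ m ih =>
    rw [step hlen, ih (by simp; omega), Finset.Nat.sum_antidiagonal_succ]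
    simp [pairList]

end SlotSumRpow

section InertPairs

variable {V : Type*} [AddCommGroup V] [Module ℝ V]
variable (h ω : V →ₗ[ℝ] V →ₗ[ℝ] ℝ) (S : V →ₗ[ℝ] V) (a c : V)

def pairForm (p : ℕ) : V →ₗ[ℝ] V →ₗ[ℝ] ℝ :=
  LinearMap.mk₂ ℝ (fun x y => Rpow h S ω p (pairList a c p ++ [x, y]))
    (fun x₁ x₂ y => by
      simpa using Rpow_mid_add_smul h ω S (pre := pairList a c p) (post := [y]) (by simp) 1 1 x₁ x₂)
    (fun r x y => by
      simpa using Rpow_mid_add_smul h ω S (pre := pairList a c p) (post := [y]) (by simp) r 0 x 0)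
    (fun x y₁ y₂ => by
      simpa using
        Rpow_mid_add_smul h ω S (pre := pairList a c p ++ [x]) (post := []) (by simp) 1 1 y₁ y₂)
    (fun r x y => by
      simpa using
        Rpow_mid_add_smul h ω S (pre := pairList a c p ++ [x]) (post := []) (by simp) r 0 y 0)

variable {h ω S a c}

lemma pairForm_apply (p : ℕ) (x y : V) :
    pairForm h ω S a c p x y = Rpow h S ω p (pairList a c p ++ [x, y]) := rfl

lemma pairForm_swap (hω : ω.IsAlt) (p : ℕ) (x y : V) :
    pairForm h ω S a c p y x = -pairForm h ω S a c p x y := by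
  rw [pairForm_apply, pairForm_apply, Rpow_append_pair_swap h ω S hω p _ (by simp)]

variable (ha : RR h S a c a = 0) (hc : RR h S a c c = 0)
include ha hc

lemma RR_eq_zero_of_mem_pairList {x : V} {m : ℕ} (hx : x ∈ pairList a c m) : RR h S a c x = 0 := by
  rcases eq_or_eq_of_mem_pairList hx with rfl | rfl <;> assumption

lemma pairForm_succ (p : ℕ) (x y : V) :
    pairForm h ω S a c (p + 1) x y =
      -(pairForm h ω S a c p (RR h S a c x) y + pairForm h ω S a c p x (RR h S a c y)) := by
  simp only [pairForm_apply]
  rw [pairList, List.cons_append, List.cons_append, Rpow_succ, slotSum_append,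
    slotSum_Rpow_eq_zero h ω S (fun _ => RR_eq_zero_of_mem_pairList ha hc) (by simp), slotSum_pair]
  simp

lemma Rpow_pairList_mid_succ (j m : ℕ) (v x y : V) :
    Rpow h S ω (j + m + 1 + 1) (pairList a c (j + 1) ++ v :: c :: (pairList a c m ++ [x, y])) =
      -(Rpow h S ω (j + m + 1) (pairList a c j ++ RR h S a c v :: c :: (pairList a c m ++ [x, y]))
        + Rpow h S ω (j + m + 1)
            (pairList a c j ++ v :: c :: (pairList a c m ++ [RR h S a c x, y]))
        + Rpow h S ω (j + m + 1)
            (pairList a c j ++ v :: c :: (pairList a c m ++ [x, RR h S a c y]))) := by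
  have hpairs := fun {m} x => RR_eq_zero_of_mem_pairList (x := x) (m := m) ha hc
  rw [pairList, List.cons_append, List.cons_append, Rpow_succ, slotSum_append,
    slotSum_Rpow_eq_zero h ω S hpairs (by simp; omega), slotSum_cons, slotSum_cons, hc,
    Rpow_mid_zero h ω S (by simp; omega), slotSum_append,
    slotSum_Rpow_eq_zero h ω S hpairs (by simp; omega), slotSum_pair]
  simp
  ring

lemma Rpow_pairList_cc (j m : ℕ) (x y : V) :
    Rpow h S ω (j + m + 1) (pairList a c j ++ c :: c :: (pairList a c m ++ [x, y])) = 0 := by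
  induction j generalizing x y with
  | zero =>
    have := Rpow_succ_swap h ω S (p := m) (l := pairList a c m ++ [x, y]) (by simp) c c
    simp only [zero_add, pairList, List.nil_append]
    linarith
  | succ j ih =>
    rw [show j + 1 + m + 1 = j + m + 1 + 1 by ring, Rpow_pairList_mid_succ ha hc, hc,
      Rpow_mid_zero h ω S (by simp; ring), ih, ih]
    ring

end InertPairs

/-- Satisfied by `(a, b, c, d) = (e₁, e₂, e_{k-1}, e_k)` in the Jordan block. -/
structure JordanRelations {V : Type*} [AddCommGroup V] [Module ℝ V]
    (h : V →ₗ[ℝ] V →ₗ[ℝ] ℝ) (S : V →ₗ[ℝ] V) (a b c d : V) (ε α : ℝ) : Prop where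
  ac_a : RR h S a c a = 0
  ac_b : RR h S a c b = (ε * α) • a + ε • b
  ac_c : RR h S a c c = 0
  ac_d : RR h S a c d = (-(ε * α)) • c + (-ε) • d
  cd_a : RR h S c d a = (ε * α) • c + ε • d
  cd_b : RR h S c d b = (-(ε * α)) • d
  cd_c : RR h S c d c = 0

namespace JordanRelations

variable {V : Type*} [AddCommGroup V] [Module ℝ V]
variable {h ω : V →ₗ[ℝ] V →ₗ[ℝ] ℝ} {S : V →ₗ[ℝ] V} {a b c d : V} {ε α : ℝ}
variable (J : JordanRelations h S a b c d ε α) (hω : ω.IsAlt)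
include J hω

lemma pairForm_succ_RR_cd (p : ℕ) :
    pairForm h ω S a c (p + 1) (RR h S c d a) b +
      pairForm h ω S a c (p + 1) a (RR h S c d b) = 0 := by
  have hca := pairForm_swap (h := h) (S := S) (a := a) (c := c) hω p a c
  have hda := pairForm_swap (h := h) (S := S) (a := a) (c := c) hω p a d
  simp only [J.cd_a, J.cd_b, map_add, map_smul, LinearMap.add_apply, LinearMap.smul_apply,
    smul_eq_mul, pairForm_succ J.ac_a J.ac_c, RR_smul_right, J.ac_a, J.ac_b, J.ac_c, J.ac_d,
    map_zero, LinearMap.zero_apply]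
  linear_combination (-(ε * α * (ε * α))) * hca - ε * (ε * α) * hda

lemma Rpow_pairList_succ_d_ab (j m : ℕ) :
    Rpow h S ω (j + m + 1 + 1)
      (pairList a c (j + 1) ++ d :: c :: (pairList a c m ++ [a, b])) = 0 := by
  set L := pairList a c j ++ d :: c :: pairList a c m
  have hL : L.length = 2 * (j + m + 1) := by simp [L]; ring
  have tail : ∀ x y : V,
      pairList a c j ++ d :: c :: (pairList a c m ++ [x, y]) = L ++ [x, y] := by simp [L]
  have haa : Rpow h S ω (j + m + 1) (L ++ [a, a]) = 0 := by
    have := Rpow_append_pair_swap h ω S hω _ L hL a a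
    linarith
  rw [Rpow_pairList_mid_succ J.ac_a J.ac_c, J.ac_d, J.ac_a, J.ac_b,
    Rpow_mid_add_smul h ω S (by simp; ring), Rpow_pairList_cc J.ac_a J.ac_c, tail, tail, tail,
    Rpow_mid_zero h ω S (by simp [hL]), Rpow_append_pair_add_smul_right h ω S hL, haa]
  ring

lemma Rpow_cd_pairList_succ (m : ℕ) :
    Rpow h S ω (m + 1 + 1) (c :: d :: (pairList a c (m + 1) ++ [a, b])) =
      ε * Rpow h S ω (m + 1) (c :: d :: (pairList a c m ++ [a, b])) := by
  have hterm : ∀ ts ∈ antidiagonal m,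
      Rpow h S ω (m + 1)
          (pairList a c ts.1 ++ RR h S c d a :: c :: (pairList a c ts.2 ++ [a, b])) =
        ε * Rpow h S ω (m + 1) (pairList a c ts.1 ++ d :: c :: (pairList a c ts.2 ++ [a, b])) := by
    rintro ⟨t, s⟩ hts
    rw [HasAntidiagonal.mem_antidiagonal] at hts
    subst hts
    rw [J.cd_a, Rpow_mid_add_smul h ω S (by simp; ring), Rpow_pairList_cc J.ac_a J.ac_c]
    ring
  rw [Rpow_succ, slotSum_append, slotSum_Rpow_pairList_succ h ω S (p := m + 1) J.cd_c m (by simp),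
    slotSum_pair]
  simp only [List.nil_append, List.append_nil]
  rw [← pairForm_apply, ← pairForm_apply, J.pairForm_succ_RR_cd hω, sum_congr rfl hterm, ← mul_sum,
    sum_eq_single (0, m)]
  · rw [pairList, List.nil_append, Rpow_succ_swap h ω S (by simp) c d]
    ring
  · rintro ⟨_ | t, s⟩ hts hne
    · simp_all
    · rw [HasAntidiagonal.mem_antidiagonal] at hts
      subst hts
      rw [show t + 1 + s + 1 = t + s + 1 + 1 by ring, J.Rpow_pairList_succ_d_ab hω]
  · simp

lemma Rpow_cd_ab : Rpow h S ω 1 [c, d, a, b] = ε * (α * (ω a d + ω b c) + ω b d) := by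
  have hca := hω.neg c b
  have hdb := hω.neg d b
  simp only [Rpow_succ, slotSum_pair, List.nil_append, Rpow_zero, J.cd_a, J.cd_b, map_add,
    map_smul, LinearMap.add_apply, LinearMap.smul_apply, smul_eq_mul]
  linear_combination ε * α * hca + ε * hdb

theorem Rpow_cd_pairList_ab (q : ℕ) :
    Rpow h S ω (q + 1) (c :: d :: (pairList a c q ++ [a, b])) =
      ε ^ (q + 1) * α * (ω a d + ω b c) + ε ^ (q + 1) * ω b d := by
  induction q with
  | zero =>
    simp only [zero_add, pow_one, pairList, List.nil_append]
    rw [J.Rpow_cd_ab hω]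
    ring
  | succ q ih => rw [J.Rpow_cd_pairList_succ hω, ih]; ring

end JordanRelations

lemma JordanRelations.of_jordanBlock {V : Type*} [AddCommGroup V] [Module ℝ V]
    {h : V →ₗ[ℝ] V →ₗ[ℝ] ℝ} {S : V →ₗ[ℝ] V} {e : ℕ → V} {k : ℕ} {α ε : ℝ} (hk : 3 < k)
    (hS1 : ∀ i, 1 ≤ i → i ≤ k - 1 → S (e i) = α • e i + e (i + 1))
    (hS2 : S (e k) = α • e k)
    (hh1 : ∀ i j, 1 ≤ i ∧ i ≤ k ∧ 1 ≤ j ∧ j ≤ k ∧ i + j = k + 1 → h (e i) (e j) = ε)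
    (hh0 : ∀ i j, 1 ≤ i ∧ i ≤ k ∧ 1 ≤ j ∧ j ≤ k ∧ i + j ≠ k + 1 → h (e i) (e j) = 0) :
    JordanRelations h S (e 1) (e 2) (e (k - 1)) (e k) ε α := by
  have hSa : S (e 1) = α • e 1 + e 2 := hS1 1 le_rfl (by omega)
  have hSc : S (e (k - 1)) = α • e (k - 1) + e k := by
    simpa [Nat.sub_add_cancel (by omega : 1 ≤ k)] using hS1 (k - 1) (by omega) le_rfl
  refine ⟨?_, ?_, ?_, ?_, ?_, ?_, ?_⟩ <;> simp only [RR]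
  · rw [hh0 (k - 1) 1 (by omega), hh0 1 1 (by omega)]; simp
  · rw [hh1 (k - 1) 2 (by omega), hh0 1 2 (by omega), hSa]; module
  · rw [hh0 (k - 1) (k - 1) (by omega), hh0 1 (k - 1) (by omega)]; simp
  · rw [hh0 (k - 1) k (by omega), hh1 1 k (by omega), hSc]; module
  · rw [hh1 k 1 (by omega), hh0 (k - 1) 1 (by omega), hSc]; module
  · rw [hh0 k 2 (by omega), hh1 (k - 1) 2 (by omega), hS2]; module
  · rw [hh0 k (k - 1) (by omega), hh0 (k - 1) (k - 1) (by omega)]; simp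

theorem stmt9_general
    {V : Type*} [AddCommGroup V] [Module ℝ V]
    (n : ℕ) (e : ℕ → V)
    (h ω : V →ₗ[ℝ] V →ₗ[ℝ] ℝ)
    (halt : ∀ X, ω X X = 0)
    (S : V →ₗ[ℝ] V)
    (k : ℕ) (hk : k ≤ 2 * n)
    (α ε : ℝ)
    (hS1 : ∀ i, 1 ≤ i → i ≤ k - 1 → S (e i) = α • e i + e (i + 1))
    (hS2 : S (e k) = α • e k)
    (hh1 : ∀ i j, 1 ≤ i → i ≤ k → 1 ≤ j → j ≤ k → i + j = k + 1 → h (e i) (e j) = ε)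
    (hh0 : ∀ i j, 1 ≤ i → i ≤ 2 * n → 1 ≤ j → j ≤ 2 * n → min i j ≤ k →
      ¬(i ≤ k ∧ j ≤ k ∧ i + j = k + 1) → h (e i) (e j) = 0)
    (hk3 : 3 < k)
    (p : ℕ) (hp : 1 ≤ p) :
    Rpow h S ω p ([e (k - 1), e k] ++ pairList (e 1) (e (k - 1)) (p - 1) ++ [e 1, e 2]) =
      ε ^ p * α * (ω (e 1) (e k) + ω (e 2) (e (k - 1))) + ε ^ p * ω (e 2) (e k) := by
  have J : JordanRelations h S (e 1) (e 2) (e (k - 1)) (e k) ε α :=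
    .of_jordanBlock hk3 hS1 hS2
      (fun i j _ => hh1 i j (by omega) (by omega) (by omega) (by omega) (by omega))
      (fun i j _ => hh0 i j (by omega) (by omega) (by omega) (by omega) (by omega) (by omega))
  obtain ⟨q, rfl⟩ : ∃ q, p = q + 1 := ⟨p - 1, by omega⟩
  simpa using J.Rpow_cd_pairList_ab halt q

theorem stmt9
    {V : Type*} [AddCommGroup V] [Module ℝ V]
    (n : ℕ) (hn : 2 ≤ n) (e : ℕ → V)
    (hbasis : ∃ b : Module.Basis (Fin (2 * n)) ℝ V, ∀ i : Fin (2 * n), b i = e (i.1 + 1))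
    (h ω : V →ₗ[ℝ] V →ₗ[ℝ] ℝ)
    (hsymm : ∀ X Y, h X Y = h Y X)
    (halt : ∀ X, ω X X = 0)
    (S : V →ₗ[ℝ] V)
    (k : ℕ) (hk2 : 2 ≤ k) (hk : k ≤ 2 * n)
    (α ε : ℝ) (hε : ε = 1 ∨ ε = -1)
    (hS1 : ∀ i, 1 ≤ i → i ≤ k - 1 → S (e i) = α • e i + e (i + 1))
    (hS2 : S (e k) = α • e k)
    (hh1 : ∀ i j, 1 ≤ i → i ≤ k → 1 ≤ j → j ≤ k → i + j = k + 1 → h (e i) (e j) = ε)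
    (hh0 : ∀ i j, 1 ≤ i → i ≤ 2 * n → 1 ≤ j → j ≤ 2 * n → min i j ≤ k →
      ¬(i ≤ k ∧ j ≤ k ∧ i + j = k + 1) → h (e i) (e j) = 0)
    (hk3 : 3 < k)
    (p : ℕ) (hp : 1 ≤ p) :
    Rpow h S ω p ([e (k - 1), e k] ++ pairList (e 1) (e (k - 1)) (p - 1) ++ [e 1, e 2]) =
      ε ^ p * α * (ω (e 1) (e k) + ω (e 2) (e (k - 1))) + ε ^ p * ω (e 2) (e k) :=
  stmt9_general n e h ω halt S k hk α ε hS1 hS2 hh1 hh0 hk3 p hp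
end
end

section
/- Let k > 3 and p ≥ 1. Then (R^p·ω)(e_1, e_{k−1}, e_1, e_{k−1}, …, e_1, e_{k−1}, e_1, e_3), with p leading pairs (e_1, e_{k−1}) and ending with e_1, e_3, equals 0. -/
noncomputable section

/-! The outermost curvature operator `R(e₁, e_{k−1})` already kills every remaining argument
`e₁`, `e_{k−1}`, `e₃`: these are `h`-orthogonal to both `e₁` and `e_{k−1}`, because no two of
the indices sum to `k + 1` once `k > 3`. Each summand of `R^p·ω` therefore has a zero argument,
and `R^{p−1}·ω` is multilinear. -/

section Curvature

variable {V : Type*} [AddCommGroup V] [Module ℝ V]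
  (h : V →ₗ[ℝ] V →ₗ[ℝ] ℝ) (S : V →ₗ[ℝ] V)

lemma RR_eq_zero_of_apply_eq_zero {X Y Z : V} (hX : h X Z = 0) (hY : h Y Z = 0) :
    RR h S X Y Z = 0 := by
  simp [RR, hX, hY]

lemma RR_zero_right (X Y : V) : RR h S X Y 0 = 0 :=
  RR_eq_zero_of_apply_eq_zero h S (by simp) (by simp)

lemma zero_mem_set_RR {X Y : V} {Zs : List V} (h0 : (0 : V) ∈ X :: Y :: Zs) {i : ℕ}
    (hi : i < Zs.length) : (0 : V) ∈ Zs.set i (RR h S X Y (Zs.getD i 0)) := by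
  have hset : ∀ v, v = 0 → (0 : V) ∈ Zs.set i v := by
    rintro v rfl
    exact List.mem_iff_getElem.mpr ⟨i, by simpa using hi, by simp⟩
  rcases List.mem_cons.mp h0 with rfl | h0
  · exact hset _ (by simp [RR])
  rcases List.mem_cons.mp h0 with rfl | h0
  · exact hset _ (by simp [RR])
  obtain ⟨j, hj, hZj⟩ := List.getElem_of_mem h0
  by_cases hij : i = j
  · subst hij
    exact hset _ (by rw [List.getD_eq_getElem _ _ hi, hZj, RR_zero_right])
  · exact List.mem_iff_getElem.mpr
      ⟨j, by simpa using hj, by rw [List.getElem_set_ne hij]; exact hZj⟩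

lemma RAct_eq_zero_of_zero_mem {T : List V → ℝ} {m : ℕ}
    (hT : ∀ l : List V, l.length = m → (0 : V) ∈ l → T l = 0)
    {l : List V} (hl : l.length = m + 2) (h0 : (0 : V) ∈ l) : RAct h S T l = 0 := by
  match l, hl with
  | X :: Y :: Zs, hl =>
    refine neg_eq_zero.mpr (Finset.sum_eq_zero fun i hi => hT _ ?_ ?_)
    · simpa using hl
    · exact zero_mem_set_RR h S h0 (Finset.mem_range.mp hi)

lemma Rpow_succ_s10 (ω : V →ₗ[ℝ] V →ₗ[ℝ] ℝ) (p : ℕ) :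
    Rpow h S ω (p + 1) = RAct h S (Rpow h S ω p) :=
  Function.iterate_succ_apply' _ _ _

lemma Rpow_eq_zero_of_zero_mem (ω : V →ₗ[ℝ] V →ₗ[ℝ] ℝ) (p : ℕ) {l : List V}
    (hl : l.length = 2 * p + 2) (h0 : (0 : V) ∈ l) : Rpow h S ω p l = 0 := by
  induction p generalizing l with
  | zero =>
    match l, hl with
    | [X, Y], _ =>
      rcases List.mem_pair.mp h0 with rfl | rfl <;> simp [Rpow]
  | succ p ih =>
    rw [Rpow_succ_s10]
    exact RAct_eq_zero_of_zero_mem h S (fun l' hl' h0' => ih hl' h0') hl h0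

lemma Rpow_succ_cons_eq_zero (ω : V →ₗ[ℝ] V →ₗ[ℝ] ℝ) (p : ℕ) {X Y : V} {Zs : List V}
    (hZs : Zs.length = 2 * p + 2) (hRR : ∀ Z ∈ Zs, RR h S X Y Z = 0) :
    Rpow h S ω (p + 1) (X :: Y :: Zs) = 0 := by
  rw [Rpow_succ_s10]
  refine neg_eq_zero.mpr (Finset.sum_eq_zero fun i hi => ?_)
  have hi : i < Zs.length := Finset.mem_range.mp hi
  refine Rpow_eq_zero_of_zero_mem h S ω p (by simpa using hZs) ?_
  rw [hRR _ (List.getD_eq_getElem Zs 0 hi ▸ List.getElem_mem hi)]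
  exact List.mem_iff_getElem.mpr ⟨i, by simpa using hi, by simp⟩

end Curvature

lemma length_pairList {V : Type*} (X Y : V) (p : ℕ) : (pairList X Y p).length = 2 * p := by
  induction p with
  | zero => rfl
  | succ p ih => simp [pairList, ih]; ring

lemma eq_or_eq_of_mem_pairList_s10 {V : Type*} {X Y Z : V} {p : ℕ} (hZ : Z ∈ pairList X Y p) :
    Z = X ∨ Z = Y := by
  induction p with
  | zero => simp [pairList] at hZ
  | succ p ih =>
    rcases List.mem_cons.mp hZ with rfl | hZ
    · exact .inl rfl
    rcases List.mem_cons.mp hZ with rfl | hZ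
    · exact .inr rfl
    · exact ih hZ

theorem stmt10_general
    {V : Type*} [AddCommGroup V] [Module ℝ V]
    (n : ℕ) (e : ℕ → V)
    (h ω : V →ₗ[ℝ] V →ₗ[ℝ] ℝ)
    (S : V →ₗ[ℝ] V)
    (k : ℕ) (hk : k ≤ 2 * n)
    (hh0 : ∀ i j, 1 ≤ i → i ≤ 2 * n → 1 ≤ j → j ≤ 2 * n → min i j ≤ k →
      ¬(i ≤ k ∧ j ≤ k ∧ i + j = k + 1) → h (e i) (e j) = 0)
    (hk3 : 3 < k)
    (p : ℕ) (hp : 1 ≤ p) :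
    Rpow h S ω p (pairList (e 1) (e (k - 1)) p ++ [e 1, e 3]) = 0 := by
  obtain ⟨q, rfl⟩ : ∃ q, p = q + 1 := ⟨p - 1, by omega⟩
  have horth : ∀ i ∈ [1, k - 1], ∀ j ∈ [1, k - 1, 3], h (e i) (e j) = 0 := by
    intro i hi j hj
    simp only [List.mem_cons, List.not_mem_nil, or_false] at hi hj
    exact hh0 i j (by omega) (by omega) (by omega) (by omega) (by omega) (by omega)
  refine Rpow_succ_cons_eq_zero h S ω q (by simp [length_pairList]) fun Z hZ => ?_
  obtain ⟨j, hj, rfl⟩ : ∃ j ∈ [1, k - 1, 3], Z = e j := by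
    rcases List.mem_append.mp hZ with hZ | hZ
    · rcases eq_or_eq_of_mem_pairList_s10 hZ with rfl | rfl <;> simp
    · rcases List.mem_pair.mp hZ with rfl | rfl <;> simp
  exact RR_eq_zero_of_apply_eq_zero h S (horth 1 (by simp) j hj) (horth (k - 1) (by simp) j hj)

theorem stmt10
    {V : Type*} [AddCommGroup V] [Module ℝ V]
    (n : ℕ) (hn : 2 ≤ n) (e : ℕ → V)
    (hbasis : ∃ b : Module.Basis (Fin (2 * n)) ℝ V, ∀ i : Fin (2 * n), b i = e (i.1 + 1))
    (h ω : V →ₗ[ℝ] V →ₗ[ℝ] ℝ)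
    (hsymm : ∀ X Y, h X Y = h Y X)
    (halt : ∀ X, ω X X = 0)
    (S : V →ₗ[ℝ] V)
    (k : ℕ) (hk2 : 2 ≤ k) (hk : k ≤ 2 * n)
    (α ε : ℝ) (hε : ε = 1 ∨ ε = -1)
    (hS1 : ∀ i, 1 ≤ i → i ≤ k - 1 → S (e i) = α • e i + e (i + 1))
    (hS2 : S (e k) = α • e k)
    (hh1 : ∀ i j, 1 ≤ i → i ≤ k → 1 ≤ j → j ≤ k → i + j = k + 1 → h (e i) (e j) = ε)
    (hh0 : ∀ i j, 1 ≤ i → i ≤ 2 * n → 1 ≤ j → j ≤ 2 * n → min i j ≤ k →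
      ¬(i ≤ k ∧ j ≤ k ∧ i + j = k + 1) → h (e i) (e j) = 0)
    (hk3 : 3 < k)
    (p : ℕ) (hp : 1 ≤ p) :
    Rpow h S ω p (pairList (e 1) (e (k - 1)) p ++ [e 1, e 3]) = 0 :=
  stmt10_general n e h ω S k hk hh0 hk3 p hp
end
end
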